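/- Consider a three-way tensor H ∈ ℝ^{D×D×L} whose l-th frontal slice equals Λ^{l−1}, where Λ is a D×D block-diagonal real matrix with n 1×1 blocks (λ_1,…,λ_n) and m 2×2 rotation-scaling blocks. Then H admits a decomposition H = G ×₃ W with a core tensor G ∈ ℝ^{D×D×D} and factor matrix W ∈ ℝ^{L×D}, i.e. H_{::l} = ∑_{k=1}^D w_{lk} G_{::k}, where G_{::k} and w_{lk} are given explicitly: for k ≤ n, G_{::k} = e_k e_kᵀ and w_{lk} = λ_k^{l−1}; and for each 2×2 block indexed by (k, k+1), the slices G_{::k}, G_{::k+1} and columns w_{:k}, w_{:k+1} encode the real and imaginary parts of the complex power. -/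
import Mathlib


open Matrix

/-- The block-diagonal real modal-form matrix with `n` real eigenvalues
`λ_1, …, λ_n` and `m` 2×2 rotation-scaling blocks `[[σ_i, ω_i], [−ω_i, σ_i]]`,
on index type `Fin n ⊕ (Fin m × Fin 2)` (so `D = n + 2m`). -/
def modalForm (n m : ℕ) (lam : Fin n → ℝ) (σ ω : Fin m → ℝ) :
    Matrix (Fin n ⊕ Fin m × Fin 2) (Fin n ⊕ Fin m × Fin 2) ℝ :=
  fun p q =>
    match p, q with
    | Sum.inl i, Sum.inl j => if i = j then lam i else 0
    | Sum.inr (i, a), Sum.inr (j, b) => if i = j then (!![σ i, ω i; -ω i, σ i]) a b else 0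
    | _, _ => 0

namespace ModalAux

noncomputable def zc {m : ℕ} (σ ω : Fin m → ℝ) (i : Fin m) : ℂ := ⟨σ i, ω i⟩

/-- Explicit form of the `l`-th power of the modal form. -/
noncomputable def F {n m : ℕ} (lam : Fin n → ℝ) (σ ω : Fin m → ℝ) (l : ℕ) :
    Matrix (Fin n ⊕ Fin m × Fin 2) (Fin n ⊕ Fin m × Fin 2) ℝ :=
  fun p q =>
    match p, q with
    | Sum.inl i, Sum.inl j => if i = j then lam i ^ l else 0
    | Sum.inr (i, a), Sum.inr (j, b) =>
        if i = j then
          (!![((zc σ ω i)^l).re, ((zc σ ω i)^l).im;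
             -(((zc σ ω i)^l).im), ((zc σ ω i)^l).re]) a b
        else 0
    | _, _ => 0

theorem pow_eq {n m : ℕ} (lam : Fin n → ℝ) (σ ω : Fin m → ℝ) (l : ℕ) :
    (modalForm n m lam σ ω) ^ l = F lam σ ω l := by
  induction l with
  | zero =>
      ext p q
      rcases p with i | ⟨i, a⟩ <;> rcases q with j | ⟨j, b⟩ <;>
        simp [F, Matrix.one_apply, Prod.ext_iff] <;>
        · rcases eq_or_ne i j with h | h
          · subst h; fin_cases a <;> fin_cases b <;> simp
          · simp [h]
  | succ l ih =>
      rw [pow_succ, ih]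
      ext p q
      rw [Matrix.mul_apply, Fintype.sum_sum_type]
      rcases p with i | ⟨i, a⟩ <;> rcases q with j | ⟨j, b⟩
      · simp only [F, modalForm]
        rw [Finset.sum_eq_single j (by intro r _ hr; simp [hr]) (by simp)]
        simp [Fintype.sum_prod_type, pow_succ]
        rcases eq_or_ne i j with h | h <;> simp [h]
      · simp [F, modalForm, Fintype.sum_prod_type, Fin.sum_univ_two]
      · simp [F, modalForm, Fintype.sum_prod_type, Fin.sum_univ_two]
      · rw [Finset.sum_eq_zero (fun r _ => by simp [F, modalForm]), zero_add,
          Fintype.sum_prod_type,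
          Finset.sum_eq_single j
            (fun r _ hr => Finset.sum_eq_zero (fun c _ => by simp [modalForm, hr]))
            (by simp)]
        rcases eq_or_ne i j with h | h
        · subst h
          simp only [F, modalForm, if_pos rfl]
          rw [pow_succ]
          fin_cases a <;> fin_cases b <;>
            simp [Fin.sum_univ_two, Complex.mul_re, Complex.mul_im, zc] <;> ring
        · rw [Finset.sum_eq_zero (fun c _ => by simp [F, h])]
          simp [F, h]
end ModalAux

open ModalAux in
/-- Tucker rank-counting lemma (Proposition 1, Tucker-SALT rank `n + 2m`):
the tensor `H ∈ ℝ^{D×D×L}` with `l`-th frontal slice `Λ^{l−1}` (here indexed so slice `l`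
is `Λ^l`) admits a mode-3 decomposition `H = G ×₃ W`, i.e. each slice is a linear
combination of `D` fixed core slices `G_{::k}` with coefficients `w_{lk}`; moreover, for
the real eigenvalues, `G_{::k} = e_k e_kᵀ` and `w_{lk} = λ_k^{l−1}`. -/
theorem modal_form_powers_tucker_decomposition (n m L : ℕ)
    (lam : Fin n → ℝ) (σ ω : Fin m → ℝ) :
    ∃ (G : (Fin n ⊕ Fin m × Fin 2) →
        Matrix (Fin n ⊕ Fin m × Fin 2) (Fin n ⊕ Fin m × Fin 2) ℝ)
      (W : Fin L → (Fin n ⊕ Fin m × Fin 2) → ℝ),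
      (∀ l : Fin L,
        (modalForm n m lam σ ω) ^ (l : ℕ) = ∑ k, W l k • G k) ∧
      (∀ i : Fin n, G (Sum.inl i)
        = fun p q => if p = Sum.inl i ∧ q = Sum.inl i then 1 else 0) ∧
      (∀ (l : Fin L) (i : Fin n), W l (Sum.inl i) = lam i ^ (l : ℕ)) := by
  classical
  refine ⟨fun k => match k with
    | Sum.inl i => fun p q => if p = Sum.inl i ∧ q = Sum.inl i then 1 else 0
    | Sum.inr (i, a) => fun p q =>
        match p, q with
        | Sum.inr (i', c), Sum.inr (j', d) =>
            if i' = i ∧ j' = i then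
              (if a = 0 then (!![1, 0; 0, 1] : Matrix (Fin 2) (Fin 2) ℝ) c d
               else (!![0, 1; -1, 0] : Matrix (Fin 2) (Fin 2) ℝ) c d)
            else 0
        | _, _ => 0,
    fun l k => match k with
    | Sum.inl i => lam i ^ (l : ℕ)
    | Sum.inr (i, a) => if a = 0 then ((zc σ ω i) ^ (l : ℕ)).re
        else ((zc σ ω i) ^ (l : ℕ)).im,
    ?_, fun i => rfl, fun l i => rfl⟩
  intro l
  rw [pow_eq]
  ext p q
  rw [Matrix.sum_apply]
  simp only [Matrix.smul_apply, smul_eq_mul]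
  rw [Fintype.sum_sum_type, Fintype.sum_prod_type]
  rcases p with i | ⟨i, a⟩ <;> rcases q with j | ⟨j, b⟩
  · rcases eq_or_ne i j with h | h
    · subst h
      rw [Finset.sum_eq_single i (by intro r _ hr; simp [hr, Ne.symm hr]) (by simp)]
      simp [F]
    · simp only [F]
      rw [if_neg h]
      symm
      rw [Finset.sum_eq_zero (fun x _ => by
        rcases eq_or_ne i x with rfl | hx
        · simp [Ne.symm h]
        · simp [hx]), Finset.sum_eq_zero (fun x _ => Finset.sum_eq_zero (fun y _ => by simp)),
        add_zero]
  · simp [F]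
  · simp [F]
  · rw [Finset.sum_eq_zero (by intro r _; simp), zero_add]
    rw [Finset.sum_eq_single i ?_ (by simp)]
    · rcases eq_or_ne i j with h | h
      · subst h
        simp only [F, if_pos rfl]
        fin_cases a <;> fin_cases b <;> simp [Fin.sum_univ_two]
      · simp [F, Ne.symm h, h, Fin.sum_univ_two]
    · intro r _ hr
      simp [Ne.symm hr, Fin.sum_univ_two]
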